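/- arXiv:1911.09088 — 2 statements merged into one kernel-verified Lean document; each statement's English description precedes it below -/
import Mathlib

section
/- Every subset A of Homeo(ω₁) that is invariant under conjugation and contains the pointwise stabilizer of some countable family of points of ω₁ is dense in Homeo(ω₁) for the topology of pointwise convergence. -/
noncomputable section
open Ordinal Set Topology

/-- The first uncountable ordinal `ω₁`, as a type, endowed with the order topology. -/
def Omega1 : Type 1 := Set.Iio (Ordinal.omega 1)

instance : LinearOrder Omega1 := inferInstanceAs (LinearOrder (Set.Iio (Ordinal.omega 1)))
instance : TopologicalSpace Omega1 := Preorder.topology Omega1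
instance : OrderTopology Omega1 := ⟨rfl⟩

/-- The underlying ordinal of a point of `ω₁`. -/
def Omega1.toOrdinal (x : Omega1) : Ordinal := Subtype.val x

theorem Omega1.toOrdinal_lt (x : Omega1) : x.toOrdinal < Ordinal.omega 1 := Subtype.prop x

/-- Build a point of `ω₁` from a countable ordinal. -/
def Omega1.mk (o : Ordinal) (h : o < Ordinal.omega 1) : Omega1 := Subtype.mk o h

/-- The group structure on the self-homeomorphism group of a topological space. -/
instance {X : Type*} [TopologicalSpace X] : Group (X ≃ₜ X) where
  mul g h := h.trans g
  one := Homeomorph.refl X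
  inv := Homeomorph.symm
  mul_assoc _ _ _ := Homeomorph.ext fun _ => rfl
  one_mul _ := Homeomorph.ext fun _ => rfl
  mul_one _ := Homeomorph.ext fun _ => rfl
  inv_mul_cancel g := Homeomorph.ext fun x => g.symm_apply_apply x

/-- The topology of pointwise convergence on the homeomorphism group of `ω₁`. -/
instance : TopologicalSpace (Omega1 ≃ₜ Omega1) :=
  TopologicalSpace.induced (fun g : Omega1 ≃ₜ Omega1 => (g : Omega1 → Omega1))
    Pi.topologicalSpace

/-!
Given `g` and a finite set `F`, pick `l` above the countable set `D ∪ F` such that `g` and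
`g⁻¹` both map `[0, l]` into itself: close off under `g^{±1}` countably often and use
continuity at the limit. As `[0, l]` is clopen, `a := g` on `[0, l]` and `id` above is a
homeomorphism agreeing with `g` on `F`. If `h` swaps `[0, l]` with its translate
`(l, (l + 1) + l]`, then `h⁻¹ a h` fixes `[0, l] ⊇ D`, so it lies in `A`, and hence so does its
conjugate `a`.
-/

theorem IsClopen.continuous_if {X Y : Type*} [TopologicalSpace X] [TopologicalSpace Y]
    {p : X → Prop} [DecidablePred p] (hp : IsClopen {x | p x}) {f g : X → Y} (hf : Continuous f)
    (hg : Continuous g) : Continuous fun x => if p x then f x else g x :=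
  hf.if (by simp [hp.frontier_eq]) hg

namespace Homeomorph

variable {X : Type*} [TopologicalSpace X] {s : Set X} [DecidablePred (· ∈ s)]

def piecewiseId (g : X ≃ₜ X) (hs : IsClopen s) (hg : MapsTo g s s) (hg' : MapsTo g.symm s s) :
    X ≃ₜ X where
  toFun x := if x ∈ s then g x else x
  invFun x := if x ∈ s then g.symm x else x
  left_inv x := by
    by_cases hx : x ∈ s
    · simp [hx, hg hx]
    · simp [hx]
  right_inv x := by
    by_cases hx : x ∈ s
    · simp [hx, hg' hx]
    · simp [hx]
  continuous_toFun := hs.continuous_if (p := (· ∈ s)) g.continuous continuous_id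
  continuous_invFun := hs.continuous_if (p := (· ∈ s)) g.symm.continuous continuous_id

theorem piecewiseId_apply_of_mem (g : X ≃ₜ X) (hs : IsClopen s) (hg : MapsTo g s s)
    (hg' : MapsTo g.symm s s) {x : X} (hx : x ∈ s) : g.piecewiseId hs hg hg' x = g x :=
  if_pos hx

theorem piecewiseId_apply_of_notMem (g : X ≃ₜ X) (hs : IsClopen s) (hg : MapsTo g s s)
    (hg' : MapsTo g.symm s s) {x : X} (hx : x ∉ s) : g.piecewiseId hs hg hg' x = x :=
  if_neg hx

end Homeomorph

theorem continuous_projIci {α : Type*} [LinearOrder α] [TopologicalSpace α]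
    [OrderClosedTopology α] {a : α} : Continuous (projIci a) :=
  (continuous_const.max continuous_id).subtype_mk _

open Cardinal Filter

namespace Omega1

instance : WellFoundedLT Omega1 := inferInstanceAs (WellFoundedLT (Set.Iio (ω_ 1)))

instance : NoMaxOrder Omega1 where
  exists_gt x := ⟨mk (x.toOrdinal + 1) ((isSuccLimit_omega 1).add_one_lt x.toOrdinal_lt),
    show x.toOrdinal < x.toOrdinal + 1 from Order.lt_add_one_iff.mpr le_rfl⟩

instance : SuccOrder Omega1 := SuccOrder.ofLinearWellFoundedLT Omega1

theorem toOrdinal_injective : Function.Injective toOrdinal := Subtype.val_injective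

theorem countable_Iio (b : Omega1) : (Iio b).Countable := by
  have hb : (Iio b.toOrdinal).Countable := by
    rw [← le_aleph0_iff_set_countable, Cardinal.mk_Iio_ordinal, lift_le_aleph0,
      ← lt_aleph_one_iff, ← lt_omega_iff_card_lt]
    exact b.toOrdinal_lt
  exact hb.preimage toOrdinal_injective

theorem countable_Iic (b : Omega1) : (Iic b).Countable :=
  Order.Iio_succ b ▸ countable_Iio _

theorem bddAbove_of_countable {s : Set Omega1} (hs : s.Countable) : BddAbove s := by
  have : Countable s := hs.to_subtype
  refine ⟨mk (⨆ x : s, x.1.toOrdinal) (Ordinal.iSup_lt_omega_one fun x => x.1.toOrdinal_lt),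
    fun x hx => ?_⟩
  exact Ordinal.le_iSup (fun x : s => x.1.toOrdinal) ⟨x, hx⟩

theorem isClopen_Iic (b : Omega1) : IsClopen (Iic b) :=
  ⟨isClosed_Iic, Order.Iio_succ b ▸ isOpen_Iio⟩

theorem exists_isLUB_of_countable {s : Set Omega1} (hs : s.Countable) : ∃ l, IsLUB s l := by
  obtain ⟨l, hl, hmin⟩ := wellFounded_lt.has_min _ (bddAbove_of_countable hs)
  exact ⟨l, hl, fun x hx => not_lt.mp (hmin x hx)⟩

theorem exists_ge_mapsTo_Iic {ι : Type*} [Countable ι] (f : ι → Omega1 → Omega1)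
    (b : Omega1) : ∃ b', b ≤ b' ∧ ∀ i, MapsTo (f i) (Iic b) (Iic b') := by
  have hS : (insert b (⋃ i, f i '' Iic b)).Countable :=
    (countable_iUnion fun i => (countable_Iic b).image (f i)).insert b
  obtain ⟨b', hb'⟩ := bddAbove_of_countable hS
  exact ⟨b', hb' (mem_insert _ _), fun i x hx =>
    hb' (mem_insert_of_mem _ (mem_iUnion.mpr ⟨i, mem_image_of_mem _ hx⟩))⟩

theorem exists_ge_mapsTo_Iic_self {ι : Type*} [Countable ι] {f : ι → Omega1 → Omega1}
    (hf : ∀ i, Continuous (f i)) (c : Omega1) :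
    ∃ l, c ≤ l ∧ ∀ i, MapsTo (f i) (Iic l) (Iic l) := by
  choose next le_next mapsTo_next using exists_ge_mapsTo_Iic f
  set β : ℕ → Omega1 := fun n => next^[n] c
  have hβ : ∀ n, β (n + 1) = next (β n) := fun n => Function.iterate_succ_apply' next n c
  have hmono : Monotone β := monotone_nat_of_le_succ fun n => hβ n ▸ le_next (β n)
  obtain ⟨l, hl⟩ := exists_isLUB_of_countable (countable_range β)
  have hβl : ∀ n, β n ≤ l := fun n => hl.1 (mem_range_self n)
  have hstep : ∀ i n, ∀ x ≤ β n, f i x ≤ l := fun i n x hx =>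
    (mapsTo_next (β n) i hx).trans (hβ n ▸ hβl (n + 1))
  refine ⟨l, hβl 0, fun i x hx => ?_⟩
  rcases (mem_Iic.mp hx).lt_or_eq with hx | rfl
  · obtain ⟨_, ⟨n, rfl⟩, hxn⟩ := (lt_isLUB_iff hl).mp hx
    exact hstep i n x hxn.le
  · have hlim : Tendsto (f i ∘ β) atTop (𝓝 (f i x)) :=
      ((hf i).tendsto x).comp (tendsto_atTop_isLUB hmono hl)
    exact le_of_tendsto' hlim fun n => hstep i n (β n) le_rfl

def addLeft (m : Omega1) : Omega1 ≃o Ici m :=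
  StrictMono.orderIsoOfSurjective
    (fun x => ⟨mk (m.toOrdinal + x.toOrdinal)
      (isPrincipal_add_omega 1 m.toOrdinal_lt x.toOrdinal_lt),
      show m.toOrdinal ≤ _ from le_self_add⟩)
    (fun x y h => show m.toOrdinal + x.toOrdinal < m.toOrdinal + y.toOrdinal from
      (add_lt_add_iff_left _).mpr h)
    (fun y => ⟨mk (y.1.toOrdinal - m.toOrdinal)
      ((Ordinal.sub_le_self _ _).trans_lt y.1.toOrdinal_lt),
      Subtype.ext (Subtype.ext (Ordinal.add_sub_cancel_of_le y.2))⟩)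

section swap

variable {l : Omega1} (e : Omega1 ≃o Ici (Order.succ l))

/-- The involution exchanging `Iic l` with `e '' Iic l`; `projIci` extends `e.symm`
continuously to all of `ω₁`. -/
def swapIicFun (x : Omega1) : Omega1 :=
  if x ≤ l then e x else if x ≤ e l then e.symm (projIci _ x) else x

theorem lt_orderIso_Ici_succ (x : Omega1) : l < (e x : Omega1) :=
  Order.succ_le_iff.mp (e x).2

theorem swapIicFun_involutive : Function.Involutive (swapIicFun e) := by
  intro x
  by_cases hxl : x ≤ l
  · have h1 : swapIicFun e x = e x := if_pos hxl
    have h2 : (e x : Omega1) ≤ e l := e.monotone hxl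
    rw [h1, swapIicFun, if_neg (lt_orderIso_Ici_succ e x).not_ge, if_pos h2, projIci_coe,
      e.symm_apply_apply]
  · by_cases hxe : x ≤ e l
    · have hx : Order.succ l ≤ x := Order.succ_le_of_lt (not_le.mp hxl)
      have h1 : swapIicFun e x = e.symm ⟨x, hx⟩ := by
        rw [swapIicFun, if_neg hxl, if_pos hxe, projIci_of_mem (α := Omega1) hx]
      have h2 : e.symm ⟨x, hx⟩ ≤ l := e.symm_apply_le.mpr hxe
      rw [h1, swapIicFun, if_pos h2, e.apply_symm_apply]
    · have h1 : swapIicFun e x = x := by rw [swapIicFun, if_neg hxl, if_neg hxe]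
      rw [h1, h1]

theorem continuous_swapIicFun : Continuous (swapIicFun e) :=
  (isClopen_Iic l).continuous_if (continuous_subtype_val.comp e.toHomeomorph.continuous)
    ((isClopen_Iic _).continuous_if (e.toHomeomorph.symm.continuous.comp continuous_projIci)
      continuous_id)

def swapIic : Omega1 ≃ₜ Omega1 where
  toEquiv := (swapIicFun_involutive e).toPerm
  continuous_toFun := continuous_swapIicFun e
  continuous_invFun := continuous_swapIicFun e

theorem lt_swapIic_of_le {x : Omega1} (hx : x ≤ l) : l < swapIic e x := by
  change l < swapIicFun e x
  rw [swapIicFun, if_pos hx]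
  exact lt_orderIso_Ici_succ e x

end swap

theorem dense_of_forall_exists_eqOn {A : Set (Omega1 ≃ₜ Omega1)}
    (hA : ∀ (g : Omega1 ≃ₜ Omega1) (F : Finset Omega1), ∃ a ∈ A, EqOn a g F) :
    Dense A := by
  rw [dense_iff_inter_open]
  rintro U hU ⟨g, hg⟩
  obtain ⟨V, hV, rfl⟩ := isOpen_induced_iff.mp hU
  obtain ⟨F, u, hu, hsub⟩ := isOpen_pi_iff.mp hV _ hg
  obtain ⟨a, haA, hag⟩ := hA g F
  exact ⟨a, hsub fun x hx => show a x ∈ u x from hag hx ▸ (hu x hx).2, haA⟩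

theorem exists_mem_eqOn_of_conj_mem {A : Set (Omega1 ≃ₜ Omega1)}
    (hconj : ∀ g ∈ A, ∀ h : Omega1 ≃ₜ Omega1, h * g * h⁻¹ ∈ A) {D : Set Omega1}
    (hD : D.Countable) (hfix : {g : Omega1 ≃ₜ Omega1 | ∀ x ∈ D, g x = x} ⊆ A)
    (g : Omega1 ≃ₜ Omega1) {F : Set Omega1} (hF : F.Countable) : ∃ a ∈ A, EqOn a g F := by
  obtain ⟨c, hc⟩ := bddAbove_of_countable (hD.union hF)
  obtain ⟨l, hcl, hl⟩ := exists_ge_mapsTo_Iic_self (f := fun b : Bool => cond b g g.symm)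
    (Bool.forall_bool.mpr ⟨g.symm.continuous, g.continuous⟩) c
  have hDF : D ∪ F ⊆ Iic l := fun x hx => (hc hx).trans hcl
  set a := g.piecewiseId (isClopen_Iic l) (hl true) (hl false)
  set h := swapIic (addLeft (Order.succ l))
  have hfixD : h⁻¹ * a * h ∈ A := hfix fun x hx => by
    have hout : h x ∉ Iic l := (lt_swapIic_of_le _ (hDF (.inl hx))).not_ge
    change h.symm (a (h x)) = x
    rw [Homeomorph.piecewiseId_apply_of_notMem _ _ _ _ hout, h.symm_apply_apply]
  have hconj_back : h * (h⁻¹ * a * h) * h⁻¹ = a := by group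
  refine ⟨a, hconj_back ▸ hconj _ hfixD h, fun x hx => ?_⟩
  exact Homeomorph.piecewiseId_apply_of_mem _ _ _ _ (hDF (.inr hx))

end Omega1

/-- Every conjugation-invariant subset of `Homeo(ω₁)` containing the pointwise
stabilizer of a countable family of points is dense. -/
theorem conjInvariant_containing_fixator_dense (A : Set (Omega1 ≃ₜ Omega1))
    (hconj : ∀ g ∈ A, ∀ h : Omega1 ≃ₜ Omega1, h * g * h⁻¹ ∈ A)
    (D : Set Omega1) (hD : D.Countable)
    (hfix : {g : Omega1 ≃ₜ Omega1 | ∀ x ∈ D, g x = x} ⊆ A) :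
    Dense A :=
  Omega1.dense_of_forall_exists_eqOn fun g F =>
    Omega1.exists_mem_eqOn_of_conj_mem hconj hD hfix g F.countable_toSet
end
end

section
/- Let α₁,…,α_k be countable ordinals and for each i let x_i, y_i be points of Y^(α_i) = ω₁^(α_i) \ ω₁^(α_i+1), with the x_i pairwise distinct and the y_i pairwise distinct. Then there exists a homeomorphism g of ω₁ with g(x_i) = y_i for all i. In particular, Homeo(ω₁) acts transitively on each Cantor–Bendixson level of ω₁. -/
noncomputable section
open Ordinal Set Topology

/-- The set of limit (non-isolated) points of `A`, for the subspace topology on `A`. -/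
def limitPoints {X : Type*} [TopologicalSpace X] (A : Set X) : Set X :=
  {x | x ∈ A ∧ ∀ U : Set X, IsOpen U → x ∈ U → ∃ y, y ∈ U ∩ A ∧ y ≠ x}

/-- The `α`-th Cantor–Bendixson derived subset of a topological space `X`:
`X^(0) = X`, `X^(α+1)` is the set of limit points of `X^(α)`, and
`X^(λ) = ⋂_{β<λ} X^(β)` at limit stages. -/
def CBderiv (X : Type*) [TopologicalSpace X] (α : Ordinal) : Set X :=
  Ordinal.limitRecOn α Set.univ (fun _ ih => limitPoints ih)
    (fun o _ ih => ⋂ (β : Ordinal) (h : β < o), ih β h)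


/-!
Since `ω₁` is an open subspace of the ordinals, its derived sets can be computed in `Ordinal`:
for `β ≥ 1` the `β`-th derived set consists of the nonzero multiples of `ω ^ β`, so the points of
level `β ≥ 1` are the ordinals `a + ω ^ β`, while level `0` consists of the isolated points.
Such a point `z` has arbitrarily small clopen neighbourhoods `(p, z]` with `z = p + ω ^ β`, and
translation `t ↦ q + (t - p)` identifies two of them order-isomorphically, hence homeomorphically.
Gluing this translation with its inverse swaps two points of the same level while fixing any
given finite set of other points, and composing such swaps matches the `x i` with the `y i`
one index at a time.
-/

open scoped Filter

section CantorBendixson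

variable {X Y : Type*} [TopologicalSpace X] [TopologicalSpace Y]

theorem mem_limitPoints_iff_accPt {A : Set X} {x : X} :
    x ∈ limitPoints A ↔ x ∈ A ∧ AccPt x (𝓟 A) := by
  rw [accPt_iff_nhds, (nhds_basis_opens x).forall_iff fun U V hUV ⟨y, hy, hyx⟩ =>
    ⟨y, ⟨hUV hy.1, hy.2⟩, hyx⟩]
  exact and_congr_right fun _ => forall_congr' fun U => by tauto

theorem mem_limitPoints_univ_iff {x : X} : x ∈ limitPoints Set.univ ↔ ¬IsOpen {x} := by
  rw [mem_limitPoints_iff_accPt, accPt_principal_iff_nhdsWithin,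
    isOpen_singleton_iff_punctured_nhds, ← compl_eq_univ_sdiff, Filter.neBot_iff]
  exact and_iff_right trivial

theorem Topology.IsOpenEmbedding.preimage_limitPoints {f : X → Y} (hf : IsOpenEmbedding f)
    (B : Set Y) : f ⁻¹' limitPoints B = limitPoints (f ⁻¹' B) := by
  ext x
  simp only [mem_preimage, mem_limitPoints_iff_accPt, ← hf.accPt_comap_iff, Filter.comap_principal]

variable (X) in
theorem CBderiv_zero : CBderiv X 0 = Set.univ :=
  Ordinal.limitRecOn_zero _ _ _

variable (X) in
theorem CBderiv_add_one (β : Ordinal) : CBderiv X (β + 1) = limitPoints (CBderiv X β) :=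
  Ordinal.limitRecOn_add_one _ _ _ _

variable (X) in
theorem CBderiv_of_isSuccLimit {β : Ordinal} (hβ : Order.IsSuccLimit β) :
    CBderiv X β = ⋂ γ < β, CBderiv X γ :=
  Ordinal.limitRecOn_limit _ _ _ _ hβ

theorem Topology.IsOpenEmbedding.preimage_CBderiv {f : X → Y} (hf : IsOpenEmbedding f)
    (β : Ordinal) : f ⁻¹' CBderiv Y β = CBderiv X β := by
  induction β using Ordinal.limitRecOn with
  | zero => rw [CBderiv_zero, CBderiv_zero, preimage_univ]
  | add_one β ih => rw [CBderiv_add_one, CBderiv_add_one, hf.preimage_limitPoints, ih]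
  | limit β hβ ih =>
    simp only [CBderiv_of_isSuccLimit _ hβ, preimage_iInter₂]
    exact iInter₂_congr ih

variable (X) in
theorem CBderiv_lift (β : Ordinal.{u}) : CBderiv X (Ordinal.lift.{v} β) = CBderiv X β := by
  induction β using Ordinal.limitRecOn with
  | zero => rw [Ordinal.lift_zero, CBderiv_zero, CBderiv_zero]
  | add_one β ih => rw [Ordinal.lift_add_one, CBderiv_add_one, CBderiv_add_one, ih]
  | limit β hβ ih =>
    rw [CBderiv_of_isSuccLimit _ hβ, CBderiv_of_isSuccLimit _ (Ordinal.isSuccLimit_lift.2 hβ)]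
    ext x
    simp only [mem_iInter₂]
    refine ⟨fun h γ hγ => ih γ hγ ▸ h _ (Ordinal.lift_lt.2 hγ), fun h γ hγ => ?_⟩
    obtain ⟨γ, hγ', rfl⟩ := Ordinal.lt_lift_iff.1 hγ
    exact (ih γ hγ').symm ▸ h γ hγ'

def CBlevel (X : Type*) [TopologicalSpace X] (β : Ordinal) : Set X :=
  CBderiv X β \ CBderiv X (β + 1)

theorem Topology.IsOpenEmbedding.preimage_CBlevel {f : X → Y} (hf : IsOpenEmbedding f)
    (β : Ordinal) : f ⁻¹' CBlevel Y β = CBlevel X β := by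
  rw [CBlevel, CBlevel, preimage_sdiff, hf.preimage_CBderiv, hf.preimage_CBderiv]

variable (X) in
theorem CBlevel_lift (β : Ordinal.{u}) : CBlevel X (Ordinal.lift.{v} β) = CBlevel X β := by
  rw [CBlevel, CBlevel, ← Ordinal.lift_add_one, CBderiv_lift, CBderiv_lift]

theorem isOpen_singleton_of_mem_CBlevel_zero {x : X} (hx : x ∈ CBlevel X 0) : IsOpen {x} := by
  have := hx.2
  rwa [CBderiv_add_one, CBderiv_zero, mem_limitPoints_univ_iff, not_not] at this

end CantorBendixson

section Homeomorphisms

variable {X : Type*} [TopologicalSpace X]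

theorem exists_homeomorph_extend_of_isClopen {U V : Set X} (hU : IsClopen U) (hV : IsClopen V)
    (hUV : Disjoint U V) (e : U ≃ₜ V) :
    ∃ s : X ≃ₜ X, (∀ x : U, s x = e x) ∧ ∀ x ∉ U ∪ V, s x = x := by
  classical
  let f : X → X := fun x =>
    if h : x ∈ U then e ⟨x, h⟩ else if h' : x ∈ V then e.symm ⟨x, h'⟩ else x
  have hfU (x : U) : f x = e x := dif_pos x.2
  have hfV (x : V) : f x = e.symm x := by
    simp only [f, dif_neg (disjoint_right.1 hUV x.2), x.2, dite_true]
  have hfO (x : X) (hx : x ∉ U ∪ V) : f x = x := by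
    rw [mem_union, not_or] at hx
    simp only [f, hx.1, hx.2, dite_false]
  have hf : Function.Involutive f := fun x => by
    by_cases hxU : x ∈ U
    · rw [hfU ⟨x, hxU⟩, hfV, e.symm_apply_apply]
    by_cases hxV : x ∈ V
    · rw [hfV ⟨x, hxV⟩, hfU, e.apply_symm_apply]
    · rw [hfO x (by simp [hxU, hxV]), hfO x (by simp [hxU, hxV])]
  have hcont : Continuous f := by
    have hfU' : ContinuousOn f U := by
      rw [continuousOn_iff_continuous_domRestrict,
        show U.domRestrict f = (↑) ∘ e from funext hfU]
      fun_prop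
    have hfV' : ContinuousOn f V := by
      rw [continuousOn_iff_continuous_domRestrict,
        show V.domRestrict f = (↑) ∘ e.symm from funext hfV]
      fun_prop
    have hfO' : ContinuousOn f (U ∪ V)ᶜ := continuousOn_id.congr fun x hx => hfO x hx
    rw [← continuousOn_univ, ← union_compl_self (U ∪ V)]
    exact (hfU'.union_of_isOpen hfV' hU.isOpen hV.isOpen).union_of_isOpen hfO'
      (hU.isOpen.union hV.isOpen) (hU.union hV).isClosed.isOpen_compl
  exact ⟨⟨hf.toPerm f, hcont, hcont⟩, hfU, hfO⟩

theorem exists_homeomorph_swap_of_isClopen {U V F : Set X} {u v : X} (hU : IsClopen U)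
    (hV : IsClopen V) (hUV : Disjoint U V) (e : U ≃ₜ V) (hu : u ∈ U) (he : e ⟨u, hu⟩ = v)
    (hFU : F ∩ U ⊆ {u}) (hFV : F ∩ V ⊆ {v}) :
    ∃ s : X ≃ₜ X, s u = v ∧ ∀ w ∈ F, w ≠ u → w ≠ v → s w = w := by
  obtain ⟨s, hsU, hsO⟩ := exists_homeomorph_extend_of_isClopen hU hV hUV e
  refine ⟨s, (hsU ⟨u, hu⟩).trans he, fun w hw hwu hwv => hsO w ?_⟩
  rintro (hwU | hwV)
  exacts [hwu (hFU ⟨hw, hwU⟩), hwv (hFV ⟨hw, hwV⟩)]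

theorem Homeomorph.exists_apply_eq_of_forall_swap {ι κ : Type*} [Fintype ι] {S : κ → Set X}
    (hS : ∀ (g : X ≃ₜ X) c x, x ∈ S c → g x ∈ S c)
    (hswap : ∀ c, ∀ u ∈ S c, ∀ v ∈ S c, u ≠ v → ∀ F : Finset X,
      ∃ s : X ≃ₜ X, s u = v ∧ ∀ w ∈ F, w ≠ u → w ≠ v → s w = w)
    (c : ι → κ) {x y : ι → X} (hx : ∀ i, x i ∈ S (c i)) (hy : ∀ i, y i ∈ S (c i))
    (hxinj : Function.Injective x) (hyinj : Function.Injective y) :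
    ∃ g : X ≃ₜ X, ∀ i, g (x i) = y i := by
  classical
  suffices ∀ I : Finset ι, ∃ g : X ≃ₜ X, ∀ i ∈ I, g (x i) = y i by
    simpa using this Finset.univ
  intro I
  induction I using Finset.induction_on with
  | empty => exact ⟨Homeomorph.refl X, by simp⟩
  | insert j I hj ih =>
    obtain ⟨g, hg⟩ := ih
    by_cases hgj : g (x j) = y j
    · exact ⟨g, Finset.forall_mem_insert _ _ _ |>.2 ⟨hgj, hg⟩⟩
    obtain ⟨s, hsj, hsI⟩ := hswap (c j) _ (hS g _ _ (hx j)) _ (hy j) hgj (I.image y)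
    refine ⟨g.trans s, Finset.forall_mem_insert _ _ _ |>.2 ⟨hsj, fun i hi => ?_⟩⟩
    have hij : i ≠ j := ne_of_mem_of_not_mem hi hj
    rw [Homeomorph.trans_apply, hg i hi]
    refine hsI _ (Finset.mem_image_of_mem y hi) (fun h => hij ?_) (hyinj.ne hij)
    exact hxinj (g.injective ((hg i hi).trans h))

end Homeomorphisms

theorem isClopen_Ioc_of_succOrder {α : Type*} [LinearOrder α] [TopologicalSpace α]
    [OrderTopology α] [SuccOrder α] [NoMaxOrder α] (a b : α) : IsClopen (Ioc a b) :=
  ⟨Order.Icc_succ_left a b ▸ isClosed_Icc, Order.Ioo_succ_right a b ▸ isOpen_Ioo⟩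

theorem disjoint_Ioc_of_notMem_Ioc {α : Type*} [LinearOrder α] {p u q v : α}
    (hu : u ∉ Ioc q v) (hv : v ∉ Ioc p u) : Disjoint (Ioc p u) (Ioc q v) := by
  refine disjoint_left.2 fun w ⟨hpw, hwu⟩ ⟨hqw, hwv⟩ => ?_
  rcases le_total u v with huv | hvu
  exacts [hu ⟨hqw.trans_le hwu, huv⟩, hv ⟨hpw.trans_le hwv, hvu⟩]

namespace Ordinal

theorem opow_dvd_of_isSuccLimit {a b o : Ordinal} (ha : a ≠ 0) (hb : Order.IsSuccLimit b)
    (h : ∀ c < b, a ^ c ∣ o) : a ^ b ∣ o := by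
  rw [dvd_iff_mod_eq_zero]
  by_contra hmod
  obtain ⟨c, hcb, hc⟩ := (lt_opow_of_isSuccLimit ha hb).1 (mod_lt o (opow_ne_zero b ha))
  have hdvd : a ^ c ∣ o % a ^ b := by
    rw [← dvd_add_iff ((opow_dvd_opow a hcb.le).mul_right _), div_add_mod]
    exact h c hcb
  exact (le_of_dvd hmod hdvd).not_gt hc

theorem add_omega0_opow_eq_of_le_of_lt {a p β : Ordinal} (hap : a ≤ p) (hp : p < a + ω ^ β) :
    p + ω ^ β = a + ω ^ β := by
  rw [← Ordinal.add_sub_cancel_of_le hap, add_assoc,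
    add_of_omega0_opow_le (sub_lt_of_lt_add hp (opow_pos β omega0_pos)) le_rfl]

theorem add_sub_mem_Ioc {a b c d δ z : Ordinal} (hc : c = a + δ) (hd : d = b + δ)
    (hz : z ∈ Ioc a c) : b + (z - a) ∈ Ioc b d := by
  refine ⟨lt_add_of_pos_right b (lt_sub.2 (by simpa using hz.1)), ?_⟩
  rw [hd]
  exact add_le_add_right (sub_le.2 (hc ▸ hz.2)) b

def IocTranslate {a b c d δ : Ordinal} (hc : c = a + δ) (hd : d = b + δ) : Ioc a c ≃o Ioc b d :=
  Equiv.toOrderIso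
    { toFun z := ⟨b + (z - a), add_sub_mem_Ioc hc hd z.2⟩
      invFun z := ⟨a + (z - b), add_sub_mem_Ioc hd hc z.2⟩
      left_inv z := Subtype.ext <| by
        simp only [Ordinal.add_sub_cancel, Ordinal.add_sub_cancel_of_le z.2.1.le]
      right_inv z := Subtype.ext <| by
        simp only [Ordinal.add_sub_cancel, Ordinal.add_sub_cancel_of_le z.2.1.le] }
    (fun _ z (h : _ ≤ z.1) => add_le_add_right (sub_le.2 (h.trans (le_add_sub z.1 a))) b)
    (fun _ z (h : _ ≤ z.1) => add_le_add_right (sub_le.2 (h.trans (le_add_sub z.1 b))) a)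

theorem limitPoints_univ : limitPoints (Set.univ : Set Ordinal) = {o | o ≠ 0 ∧ ω ∣ o} := by
  ext o
  rw [mem_limitPoints_univ_iff, SuccOrder.isOpen_singleton_iff, not_not, Order.isSuccLimit_iff,
    isSuccPrelimit_iff_omega0_dvd, not_isMin_iff_ne_bot]
  rfl

theorem limitPoints_setOf_omega0_opow_dvd (β : Ordinal) :
    limitPoints {o : Ordinal | o ≠ 0 ∧ ω ^ β ∣ o} = {o | o ≠ 0 ∧ ω ^ (β + 1) ∣ o} := by
  have hmul {ξ ρ : Ordinal} : ω ^ β * ξ < ω ^ β * ρ ↔ ξ < ρ :=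
    mul_lt_mul_iff_right₀ (opow_pos β omega0_pos)
  ext o
  rw [mem_limitPoints_iff_accPt, SuccOrder.accPt_principal, not_isMin_iff_ne_bot, mem_ofPred_eq,
    opow_add, opow_one]
  constructor
  · rintro ⟨⟨ho, γ, rfl⟩, -, hacc⟩
    have hγ : Order.IsSuccPrelimit γ := Order.isSuccPrelimit_iff_succ_lt.2 fun ξ hξ => by
      obtain ⟨-, ⟨-, ρ, rfl⟩, hξρ, hργ⟩ := hacc (ω ^ β * ξ) (hmul.2 hξ)
      exact (Order.succ_le_of_lt (hmul.1 hξρ)).trans_lt (hmul.1 hργ)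
    obtain ⟨δ, rfl⟩ := isSuccPrelimit_iff_omega0_dvd.1 hγ
    exact ⟨ho, δ, (mul_assoc _ _ _).symm⟩
  · rintro ⟨ho, δ, rfl⟩
    rw [mul_assoc] at ho ⊢
    have hδ : δ ≠ 0 := right_ne_zero_of_mul (right_ne_zero_of_mul ho)
    have hlim : Order.IsSuccLimit (ω * δ) :=
      isSuccLimit_mul_left isSuccLimit_omega0 (pos_of_ne_zero hδ)
    refine ⟨⟨ho, dvd_mul_right _ _⟩, ho, fun b hb => ?_⟩
    obtain ⟨ξ, hξ, hbξ⟩ := (lt_mul_iff_of_isSuccLimit hlim).1 hb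
    have hbz : b < ω ^ β * Order.succ ξ := hbξ.trans (hmul.2 (Order.lt_succ ξ))
    exact ⟨_, ⟨(pos_of_gt hbz).ne', dvd_mul_right _ _⟩, hbz, hmul.2 (hlim.succ_lt hξ)⟩

theorem CBderiv_eq {β : Ordinal} (hβ : β ≠ 0) : CBderiv Ordinal β = {o | o ≠ 0 ∧ ω ^ β ∣ o} := by
  induction β using limitRecOn with
  | zero => exact absurd rfl hβ
  | add_one β ih =>
    rw [CBderiv_add_one]
    rcases eq_or_ne β 0 with rfl | hβ0
    · rw [CBderiv_zero, limitPoints_univ, zero_add, opow_one]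
    · rw [ih hβ0, limitPoints_setOf_omega0_opow_dvd]
  | limit β hlim ih =>
    ext o
    simp only [CBderiv_of_isSuccLimit _ hlim, mem_iInter₂, mem_ofPred_eq]
    constructor
    · intro h
      have h1 := one_lt_of_isSuccLimit hlim
      refine ⟨(ih 1 h1 one_ne_zero ▸ h 1 h1).1,
        opow_dvd_of_isSuccLimit omega0_ne_zero hlim fun γ hγ => ?_⟩
      rcases eq_or_ne γ 0 with rfl | hγ0
      · rw [opow_zero]
        exact one_dvd o
      · exact (ih γ hγ hγ0 ▸ h γ hγ).2
    · rintro ⟨ho, hdvd⟩ γ hγ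
      rcases eq_or_ne γ 0 with rfl | hγ0
      · rw [CBderiv_zero]
        trivial
      · rw [ih γ hγ hγ0]
        exact ⟨ho, (opow_dvd_opow ω hγ.le).trans hdvd⟩

theorem exists_add_omega0_opow_of_mem_CBlevel {β o : Ordinal} (hβ : β ≠ 0)
    (ho : o ∈ CBlevel Ordinal β) : ∃ a, o = a + ω ^ β := by
  rw [CBlevel, CBderiv_eq hβ, CBderiv_eq (add_pos_of_right zero_lt_one β).ne'] at ho
  obtain ⟨⟨ho0, γ, rfl⟩, hγ⟩ := ho
  rcases zero_or_succ_or_isSuccLimit γ with rfl | ⟨γ, rfl⟩ | hlim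
  · exact absurd (mul_zero _) ho0
  · exact ⟨ω ^ β * γ, mul_succ _ _⟩
  · obtain ⟨δ, rfl⟩ := isSuccPrelimit_iff_omega0_dvd.1 hlim.isSuccPrelimit
    exact absurd ⟨ho0, δ, by rw [opow_add, opow_one, mul_assoc]⟩ hγ

end Ordinal

namespace Omega1

theorem isOpenEmbedding_toOrdinal : IsOpenEmbedding toOrdinal where
  eq_induced := OrderTopology.topology_eq_generate_intervals.trans
    (orderTopology_of_ordConnected (t := Iio (omega.{0} 1))).topology_eq_generate_intervals.symm
  injective := Subtype.val_injective
  isOpen_range := by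
    rw [show range toOrdinal = Iio (omega 1) from Subtype.range_val]
    exact isOpen_Iio

theorem isClopen_Ioc (p u : Omega1) : IsClopen (Ioc p u) :=
  (isClopen_Ioc_of_succOrder p.toOrdinal u.toOrdinal).preimage
    isOpenEmbedding_toOrdinal.continuous

def IocOrderIso (p u : Omega1) : Ioc p u ≃o Ioc p.toOrdinal u.toOrdinal where
  toFun z := ⟨z.1.toOrdinal, z.2⟩
  invFun z := ⟨mk z.1 (z.2.2.trans_lt u.toOrdinal_lt), z.2⟩
  left_inv _ := rfl
  right_inv _ := rfl
  map_rel_iff' := Iff.rfl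

theorem exists_Ioc_inter_subset_singleton {z : Omega1} {a β : Ordinal}
    (hz : z.toOrdinal = a + ω ^ β) (F : Finset Omega1) :
    ∃ p < z, z.toOrdinal = p.toOrdinal + ω ^ β ∧ ↑F ∩ Ioc p z ⊆ {z} := by
  have ha : a < z.toOrdinal := hz ▸ lt_add_of_pos_right a (opow_pos β omega0_pos)
  let T := insert (mk a (ha.trans z.toOrdinal_lt)) (F.filter (· < z))
  have hT : T.Nonempty := Finset.insert_nonempty _ _
  have hpz : T.max' hT < z := by
    obtain hp | hp := Finset.mem_insert.1 (T.max'_mem hT)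
    exacts [hp ▸ ha, (Finset.mem_filter.1 hp).2]
  refine ⟨T.max' hT, hpz, hz.trans (Ordinal.add_omega0_opow_eq_of_le_of_lt
    (T.le_max' _ (Finset.mem_insert_self _ _)) (hz ▸ hpz)).symm, fun w ⟨hwF, hpw, hwz⟩ => ?_⟩
  by_contra hwz'
  exact (T.le_max' w (Finset.mem_insert_of_mem (Finset.mem_filter.2
    ⟨hwF, hwz.lt_of_ne hwz'⟩))).not_gt hpw

theorem exists_homeomorph_swap {β : Ordinal.{0}} {u v : Omega1} (hu : u ∈ CBlevel Omega1 β)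
    (hv : v ∈ CBlevel Omega1 β) (huv : u ≠ v) (F : Finset Omega1) :
    ∃ s : Omega1 ≃ₜ Omega1, s u = v ∧ ∀ w ∈ F, w ≠ u → w ≠ v → s w = w := by
  rcases eq_or_ne β 0 with rfl | hβ
  · let e := Homeomorph.homeomorphOfUnique ({u} : Set Omega1) ({v} : Set Omega1)
    exact exists_homeomorph_swap_of_isClopen
      ⟨isClosed_singleton, isOpen_singleton_of_mem_CBlevel_zero hu⟩
      ⟨isClosed_singleton, isOpen_singleton_of_mem_CBlevel_zero hv⟩
      (disjoint_singleton.2 huv) e (mem_singleton u) (e _).2 inter_subset_right inter_subset_right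
  have hlev {z : Omega1} (hz : z ∈ CBlevel Omega1 β) : ∃ a, z.toOrdinal = a + ω ^ β :=
    Ordinal.exists_add_omega0_opow_of_mem_CBlevel hβ
      ((isOpenEmbedding_toOrdinal.preimage_CBlevel β).ge hz)
  obtain ⟨a, ha⟩ := hlev hu
  obtain ⟨b, hb⟩ := hlev hv
  let G := insert u (insert v F)
  have hFG : (F : Set Omega1) ⊆ G :=
    Finset.coe_subset.2 ((Finset.subset_insert _ _).trans (Finset.subset_insert _ _))
  obtain ⟨p, hpu, hup, hGp⟩ := exists_Ioc_inter_subset_singleton ha G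
  obtain ⟨q, hqv, hvq, hGq⟩ := exists_Ioc_inter_subset_singleton hb G
  let e := (IocOrderIso p u).trans ((Ordinal.IocTranslate hup hvq).trans (IocOrderIso q v).symm)
  refine exists_homeomorph_swap_of_isClopen (isClopen_Ioc p u) (isClopen_Ioc q v)
    (disjoint_Ioc_of_notMem_Ioc (fun h => huv (hGq ⟨by simp [G], h⟩))
      (fun h => huv (hGp ⟨by simp [G], h⟩).symm))
    e.toHomeomorph ⟨hpu, le_rfl⟩ (isOpenEmbedding_toOrdinal.injective ?_)
    ((inter_subset_inter_left _ hFG).trans hGp) ((inter_subset_inter_left _ hFG).trans hGq)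
  show q.toOrdinal + (u.toOrdinal - p.toOrdinal) = v.toOrdinal
  rw [hup, Ordinal.add_sub_cancel, hvq]

end Omega1

/-- Given points `x i`, `y i` of the Cantor–Bendixson levels
`ω₁^(α i) \ ω₁^(α i + 1)` of `ω₁`, with the `x i` pairwise distinct and the
`y i` pairwise distinct, there is a homeomorphism of `ω₁` sending each `x i`
to `y i`. In particular `Homeo(ω₁)` acts transitively on each level. -/
theorem homeoOmega1_transitive_on_levels (k : ℕ) (α : Fin k → Ordinal)
    (hα : ∀ i, α i < Ordinal.omega 1) (x y : Fin k → Omega1)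
    (hx : ∀ i, x i ∈ CBderiv Omega1 (α i) \ CBderiv Omega1 (α i + 1))
    (hy : ∀ i, y i ∈ CBderiv Omega1 (α i) \ CBderiv Omega1 (α i + 1))
    (hxinj : Function.Injective x) (hyinj : Function.Injective y) :
    ∃ g : Omega1 ≃ₜ Omega1, ∀ i, g (x i) = y i := by
  have hα' (i) : α i < Ordinal.lift.{_, 0} (Ordinal.omega 1) := by
    rw [Ordinal.lift_omega, Ordinal.lift_one]
    exact hα i
  choose β _ hβ using fun i => Ordinal.lt_lift_iff.1 (hα' i)
  refine Homeomorph.exists_apply_eq_of_forall_swap (S := CBlevel Omega1)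
    (fun g γ z hz => (g.isOpenEmbedding.preimage_CBlevel γ).ge hz)
    (fun γ u hu v hv huv F => Omega1.exists_homeomorph_swap hu hv huv F) β ?_ ?_ hxinj hyinj
  all_goals intro i; rw [← CBlevel_lift, hβ]
  exacts [hx i, hy i]
end
end
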